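/- Let β₀ < α₀ be reals and let μ : ℝ² → ℝ be integrable on T(β₀,α₀). For v ∈ [β₀,α₀] define I(v) := ∬_{Ω(v)} μ(α,β) dα dβ with Ω(v) := {(α,β) : v ≤ α ≤ α₀, β₀ ≤ β ≤ v}. Suppose there exist β₀ < α₁⁻ < α₁ < α₁⁺ < α₀ with I(α₁) = 0, I(α₁⁻) ≠ 0 and I(α₁⁺) ≠ 0. Then f⁺(α₁) = f⁻(α₁) while f⁺(α₁⁻) ≠ f⁻(α₁⁻) and f⁺(α₁⁺) ≠ f⁻(α₁⁺); moreover I is continuous on [β₀,α₀], and the connected component of the zero set {v ∈ [β₀,α₀] : I(v) = 0} containing α₁ is contained in the open interval (α₁⁻, α₁⁺), hence contains neither β₀ nor α₀. Consequently the major hysteresis loop of the Preisach operator with weighting μ has a crossover point at input value α₁ whose maximal connected set of crossover points is disjoint from the loop endpoints, i.e. this Preisach operator is a multi-loop hysteresis operator. -/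

import Mathlib

/-!
At input `v`, a relay `(α, β)` of the triangle with `β ≤ v ≤ α` is `+1` on the descending and `-1`
on the ascending branch, while every other relay is in the same state on both. These relays form
the rectangle `Ω(v)`, so `f⁻(v) - f⁺(v) = 2 I(v)` and the branches cross exactly at the zeros of
`I`. Written as the integral over the triangle of `μ` times the indicator of `Ω(v)`, `I` is
continuous by dominated convergence: the indicator only jumps on the null lines `α = v`, `β = v`.
Connected subsets of `ℝ` are order-convex, so the component of the zero set through `α₁` stays
strictly between `α₁⁻` and `α₁⁺`, where `I` does not vanish.
-/

open MeasureTheory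

/-- Points of the Preisach plane are encoded as `p = (α, β)`. -/
def preisachTriangle (b₀ a₀ : ℝ) : Set (ℝ × ℝ) :=
  {p : ℝ × ℝ | b₀ ≤ p.2 ∧ p.2 ≤ p.1 ∧ p.1 ≤ a₀}

noncomputable def ascendingBranch (μ : ℝ × ℝ → ℝ) (b₀ a₀ v : ℝ) : ℝ :=
  ∫ p in preisachTriangle b₀ a₀, μ p * (if p.1 < v then (1 : ℝ) else -1)

noncomputable def descendingBranch (μ : ℝ × ℝ → ℝ) (b₀ a₀ v : ℝ) : ℝ :=
  ∫ p in preisachTriangle b₀ a₀, μ p * (if p.2 > v then (-1 : ℝ) else 1)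

noncomputable def crossoverIntegral (μ : ℝ × ℝ → ℝ) (β₀ α₀ v : ℝ) : ℝ :=
  ∫ p in {p : ℝ × ℝ | v ≤ p.1 ∧ p.1 ≤ α₀ ∧ β₀ ≤ p.2 ∧ p.2 ≤ v}, μ p

open Set Filter Topology

def bistableQuadrant (v : ℝ) : Set (ℝ × ℝ) :=
  {p | v ≤ p.1 ∧ p.2 ≤ v}

theorem measurableSet_bistableQuadrant (v : ℝ) : MeasurableSet (bistableQuadrant v) :=
  (measurableSet_le measurable_const measurable_fst).inter
    (measurableSet_le measurable_snd measurable_const)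

theorem measurableSet_preisachTriangle (b₀ a₀ : ℝ) : MeasurableSet (preisachTriangle b₀ a₀) :=
  (measurableSet_le measurable_const measurable_snd).inter
    ((measurableSet_le measurable_snd measurable_fst).inter
      (measurableSet_le measurable_fst measurable_const))

theorem crossoverIntegral_eq_setIntegral_indicator (μ : ℝ × ℝ → ℝ) (β₀ α₀ v : ℝ) :
    crossoverIntegral μ β₀ α₀ v =
      ∫ p in preisachTriangle β₀ α₀, (bistableQuadrant v).indicator μ p := by
  rw [setIntegral_indicator (measurableSet_bistableQuadrant v), crossoverIntegral]
  congr 2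
  ext p
  simp only [preisachTriangle, bistableQuadrant, mem_inter_iff, mem_ofPred_eq]
  constructor
  · rintro ⟨hv, hα₀, hβ₀, hβ⟩
    exact ⟨⟨hβ₀, hβ.trans hv, hα₀⟩, hv, hβ⟩
  · rintro ⟨⟨hβ₀, -, hα₀⟩, hv, hβ⟩
    exact ⟨hv, hα₀, hβ₀, hβ⟩

theorem relay_descending_sub_ascending (f : ℝ × ℝ → ℝ) {p : ℝ × ℝ} (hp : p.2 ≤ p.1) (v : ℝ) :
    f p * (if p.2 > v then -1 else 1) - f p * (if p.1 < v then 1 else -1) =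
      2 * (bistableQuadrant v).indicator f p := by
  simp only [indicator_apply, bistableQuadrant, mem_ofPred_eq]
  split_ifs <;> grind

theorem MeasureTheory.Integrable.mul_ite {α : Type*} [MeasurableSpace α] {ν : Measure α}
    {f : α → ℝ} (hf : Integrable f ν) {P : α → Prop} [DecidablePred P]
    (hP : MeasurableSet {x | P x}) (a b : ℝ) :
    Integrable (fun x => f x * if P x then a else b) ν :=
  hf.mul_bdd (c := max |a| |b|)
    (measurable_const.ite hP measurable_const).aestronglyMeasurable
    (ae_of_all _ fun x => by split_ifs <;> simp)

theorem descendingBranch_sub_ascendingBranch {μ : ℝ × ℝ → ℝ} {β₀ α₀ : ℝ}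
    (hμ : IntegrableOn μ (preisachTriangle β₀ α₀)) (v : ℝ) :
    descendingBranch μ β₀ α₀ v - ascendingBranch μ β₀ α₀ v =
      2 * crossoverIntegral μ β₀ α₀ v := by
  rw [descendingBranch, ascendingBranch, ← integral_sub,
    crossoverIntegral_eq_setIntegral_indicator, ← integral_const_mul]
  · exact setIntegral_congr_fun (measurableSet_preisachTriangle β₀ α₀) fun p hp =>
      relay_descending_sub_ascending μ hp.2.1 v
  · exact hμ.mul_ite (measurableSet_lt measurable_const measurable_snd) _ _
  · exact hμ.mul_ite (measurableSet_lt measurable_fst measurable_const) _ _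

theorem tendsto_integral_indicator_of_ae_eventually_mem_iff {α ι E : Type*} [MeasurableSpace α]
    [NormedAddCommGroup E] [NormedSpace ℝ E] {ν : Measure α} {l : Filter ι}
    [l.IsCountablyGenerated] {f : α → E} {s : ι → Set α} {s₀ : Set α} (hf : Integrable f ν)
    (hs : ∀ i, MeasurableSet (s i)) (hlim : ∀ᵐ x ∂ν, ∀ᶠ i in l, x ∈ s i ↔ x ∈ s₀) :
    Tendsto (fun i => ∫ x, (s i).indicator f x ∂ν) l (𝓝 (∫ x, s₀.indicator f x ∂ν)) := by
  refine tendsto_integral_filter_of_dominated_convergence (fun x => ‖f x‖)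
    (.of_forall fun i => hf.aestronglyMeasurable.indicator (hs i))
    (.of_forall fun i => ae_of_all _ fun x => norm_indicator_le_norm_self _ _) hf.norm ?_
  filter_upwards [hlim] with x hx
  refine tendsto_const_nhds.congr' (hx.mono fun i hi => ?_)
  by_cases hx₀ : x ∈ s₀ <;> simp [hx₀, hi.mpr, mt hi.mp]

theorem eventually_le_iff_of_ne {α : Type*} [LinearOrder α] [TopologicalSpace α]
    [OrderClosedTopology α] {x a : α} (h : x ≠ a) : ∀ᶠ v in 𝓝 a, (v ≤ x ↔ a ≤ x) := by
  rcases h.lt_or_gt with hxa | hax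
  · filter_upwards [eventually_gt_nhds hxa] with v hv
    exact iff_of_false (not_le.2 hv) (not_le.2 hxa)
  · filter_upwards [eventually_lt_nhds hax] with v hv
    exact iff_of_true hv.le hax.le

theorem eventually_ge_iff_of_ne {α : Type*} [LinearOrder α] [TopologicalSpace α]
    [OrderClosedTopology α] {x a : α} (h : x ≠ a) : ∀ᶠ v in 𝓝 a, (x ≤ v ↔ x ≤ a) := by
  rcases h.lt_or_gt with hxa | hax
  · filter_upwards [eventually_gt_nhds hxa] with v hv
    exact iff_of_true hv.le hxa.le
  · filter_upwards [eventually_lt_nhds hax] with v hv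
    exact iff_of_false (not_le.2 hv) (not_le.2 hax)

theorem ae_eventually_mem_bistableQuadrant_iff (v₀ : ℝ) :
    ∀ᵐ p : ℝ × ℝ, ∀ᶠ v in 𝓝 v₀, p ∈ bistableQuadrant v ↔ p ∈ bistableQuadrant v₀ := by
  have hα : ∀ᵐ p : ℝ × ℝ, p.1 ≠ v₀ :=
    Measure.quasiMeasurePreserving_fst.ae (volume.ae_ne v₀)
  have hβ : ∀ᵐ p : ℝ × ℝ, p.2 ≠ v₀ :=
    Measure.quasiMeasurePreserving_snd.ae (volume.ae_ne v₀)
  filter_upwards [hα, hβ] with p hp₁ hp₂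
  filter_upwards [eventually_le_iff_of_ne hp₁, eventually_ge_iff_of_ne hp₂] with v h₁ h₂
  simp only [bistableQuadrant, mem_ofPred_eq, h₁, h₂]

theorem continuous_crossoverIntegral {μ : ℝ × ℝ → ℝ} {β₀ α₀ : ℝ}
    (hμ : IntegrableOn μ (preisachTriangle β₀ α₀)) :
    Continuous (crossoverIntegral μ β₀ α₀) := by
  rw [funext (crossoverIntegral_eq_setIntegral_indicator μ β₀ α₀), continuous_iff_continuousAt]
  exact fun v₀ => tendsto_integral_indicator_of_ae_eventually_mem_iff hμ
    measurableSet_bistableQuadrant (ae_restrict_of_ae (ae_eventually_mem_bistableQuadrant_iff v₀))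

theorem connectedComponentIn_subset_Ioo {α : Type*} [LinearOrder α] [TopologicalSpace α]
    [OrderClosedTopology α] {Z : Set α} {a x b : α} (ha : a ∉ Z) (hb : b ∉ Z) (hax : a < x)
    (hxb : x < b) : connectedComponentIn Z x ⊆ Ioo a b := by
  intro y hy
  have hx : x ∈ connectedComponentIn Z x :=
    mem_connectedComponentIn (connectedComponentIn_nonempty_iff.1 ⟨y, hy⟩)
  have hord := (isPreconnected_connectedComponentIn (F := Z) (x := x)).ordConnected
  have hsub := connectedComponentIn_subset Z x
  constructor
  · by_contra! hya
    exact ha (hsub (hord.out hy hx ⟨hya, hax.le⟩))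
  · by_contra! hby
    exact hb (hsub (hord.out hx hy ⟨hxb.le, hby⟩))

theorem preisach_multiloop_general
    (β₀ α₀ : ℝ) (μ : ℝ × ℝ → ℝ)
    (hμ : IntegrableOn μ (preisachTriangle β₀ α₀) volume)
    (αm α₁ αp : ℝ)
    (h2 : αm < α₁) (h3 : α₁ < αp)
    (hI0 : crossoverIntegral μ β₀ α₀ α₁ = 0)
    (hIm : crossoverIntegral μ β₀ α₀ αm ≠ 0)
    (hIp : crossoverIntegral μ β₀ α₀ αp ≠ 0) :
    ascendingBranch μ β₀ α₀ α₁ = descendingBranch μ β₀ α₀ α₁ ∧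
    ascendingBranch μ β₀ α₀ αm ≠ descendingBranch μ β₀ α₀ αm ∧
    ascendingBranch μ β₀ α₀ αp ≠ descendingBranch μ β₀ α₀ αp ∧
    ContinuousOn (crossoverIntegral μ β₀ α₀) (Set.Icc β₀ α₀) ∧
    connectedComponentIn
        {v : ℝ | v ∈ Set.Icc β₀ α₀ ∧ crossoverIntegral μ β₀ α₀ v = 0} α₁
      ⊆ Set.Ioo αm αp := by
  have hdiff := descendingBranch_sub_ascendingBranch hμ
  refine ⟨?_, fun h => hIm ?_, fun h => hIp ?_, (continuous_crossoverIntegral hμ).continuousOn,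
    connectedComponentIn_subset_Ioo (fun h => hIm h.2) (fun h => hIp h.2) h2 h3⟩
  · linarith [hdiff α₁]
  · linarith [hdiff αm]
  · linarith [hdiff αp]

theorem preisach_multiloop
    (β₀ α₀ : ℝ) (hba : β₀ < α₀) (μ : ℝ × ℝ → ℝ)
    (hμ : IntegrableOn μ (preisachTriangle β₀ α₀) volume)
    (αm α₁ αp : ℝ)
    (h1 : β₀ < αm) (h2 : αm < α₁) (h3 : α₁ < αp) (h4 : αp < α₀)
    (hI0 : crossoverIntegral μ β₀ α₀ α₁ = 0)
    (hIm : crossoverIntegral μ β₀ α₀ αm ≠ 0)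
    (hIp : crossoverIntegral μ β₀ α₀ αp ≠ 0) :
    ascendingBranch μ β₀ α₀ α₁ = descendingBranch μ β₀ α₀ α₁ ∧
    ascendingBranch μ β₀ α₀ αm ≠ descendingBranch μ β₀ α₀ αm ∧
    ascendingBranch μ β₀ α₀ αp ≠ descendingBranch μ β₀ α₀ αp ∧
    ContinuousOn (crossoverIntegral μ β₀ α₀) (Set.Icc β₀ α₀) ∧
    connectedComponentIn
        {v : ℝ | v ∈ Set.Icc β₀ α₀ ∧ crossoverIntegral μ β₀ α₀ v = 0} α₁
      ⊆ Set.Ioo αm αp :=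
  preisach_multiloop_general β₀ α₀ μ hμ αm α₁ αp h2 h3 hI0 hIm hIp
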